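/- arXiv:0903.1573 — 2 statements merged into one kernel-verified Lean document; each statement's English description precedes it below -/
import Mathlib

section
/- Let G be a nilpotent group of class at most c whose abelianization G/G' has finite exponent m > 0. Then G has finite exponent dividing m^c. -/
/-!
Write `γ k` for the lower central series. The `m`-th power map sends `γ k` into `γ (k + 1)`:
for `k = 0` this is the hypothesis, and modulo `γ (k + 2)` the subgroup `γ (k + 1)` is central
and generated by commutators `⁅y, g⁆` with `y ∈ γ k`, for which
`⁅y, g⁆ ^ m ≡ ⁅y ^ m, g⁆ ∈ γ (k + 2)` by induction. Hence `g ^ (m ^ c) ∈ γ c = 1`.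
-/

open scoped commutatorElement

open Subgroup

theorem commutatorElement_pow_left_of_commute {G : Type*} [Group G] {a b : G}
    (h : Commute a ⁅a, b⁆) (n : ℕ) : ⁅a ^ n, b⁆ = ⁅a, b⁆ ^ n := by
  induction n with
  | zero => simp [commutatorElement_def]
  | succ n ih =>
    calc ⁅a ^ (n + 1), b⁆ = a * ⁅a ^ n, b⁆ * a⁻¹ * ⁅a, b⁆ := by
          simp only [commutatorElement_def, pow_succ]; group
      _ = ⁅a, b⁆ ^ n * ⁅a, b⁆ := by rw [ih, (h.pow_right n).eq, mul_inv_cancel_right]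
      _ = ⁅a, b⁆ ^ (n + 1) := (pow_succ _ _).symm

theorem pow_eq_one_of_mem_closure_of_subset_center {Q : Type*} [Group Q] {S : Set Q} {m : ℕ}
    (hS : S ⊆ center Q) (hm : ∀ s ∈ S, s ^ m = 1) {x : Q} (hx : x ∈ closure S) :
    x ^ m = 1 := by
  have hcentral : closure S ≤ center Q := (closure_le _).mpr hS
  induction hx using closure_induction with
  | mem s hs => exact hm s hs
  | one => exact one_pow m
  | mul a b ha _ iha ihb =>
    have hab : Commute a b := (mem_center_iff.mp (hcentral ha) b).symm
    rw [hab.mul_pow, iha, ihb, one_mul]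
  | inv a _ iha => rw [inv_pow, iha, inv_one]

theorem mk_mem_center_of_mem_lowerCentralSeries {G : Type*} [Group G] {n : ℕ} {x : G}
    (hx : x ∈ (⊤ : Subgroup G).lowerCentralSeries n) :
    (x : G ⧸ (⊤ : Subgroup G).lowerCentralSeries (n + 1)) ∈ center _ := by
  refine mem_center_iff.mpr fun q => ?_
  induction q using QuotientGroup.induction_on with
  | H g =>
    have hgx : ((⁅x, g⁆ : G) : G ⧸ (⊤ : Subgroup G).lowerCentralSeries (n + 1)) = 1 :=
      (QuotientGroup.eq_one_iff _).mpr (commutator_mem_commutator hx (mem_top g))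
    exact (commutatorElement_eq_one_iff_commute.mp hgx).symm.eq

section

variable {G : Type*} [Group G] {m : ℕ}

theorem pow_mem_lowerCentralSeries_succ (h : ∀ g : G, g ^ m ∈ commutator G) :
    ∀ (k : ℕ), ∀ x ∈ (⊤ : Subgroup G).lowerCentralSeries k,
      x ^ m ∈ (⊤ : Subgroup G).lowerCentralSeries (k + 1)
  | 0, x, _ => h x
  | k + 1, x, hx => by
    set N := (⊤ : Subgroup G).lowerCentralSeries (k + 2)
    let π := QuotientGroup.mk' N
    set gens :=
      {z | ∃ y ∈ (⊤ : Subgroup G).lowerCentralSeries k, ∃ g ∈ (⊤ : Subgroup G), ⁅y, g⁆ = z}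
    have hπx : π x ∈ closure (π '' gens) := by
      rw [← MonoidHom.map_closure]; exact mem_map_of_mem π hx
    have hcentral : π '' gens ⊆ (center (G ⧸ N) : Set (G ⧸ N)) := by
      rintro _ ⟨z, hz, rfl⟩
      exact mk_mem_center_of_mem_lowerCentralSeries (subset_closure hz)
    rw [← QuotientGroup.eq_one_iff, QuotientGroup.mk_pow]
    refine pow_eq_one_of_mem_closure_of_subset_center hcentral ?_ hπx
    rintro _ ⟨_, ⟨y, hy, g, -, rfl⟩, rfl⟩
    have hcomm : Commute (π y) ⁅π y, π g⁆ := by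
      rw [← map_commutatorElement]
      exact mem_center_iff.mp
        (mk_mem_center_of_mem_lowerCentralSeries (commutator_mem_commutator hy (mem_top g))) _
    have hyg : π ⁅y ^ m, g⁆ = 1 :=
      (QuotientGroup.eq_one_iff _).mpr
        (commutator_mem_commutator (pow_mem_lowerCentralSeries_succ h k y hy) (mem_top g))
    rw [map_commutatorElement, ← commutatorElement_pow_left_of_commute hcomm, ← map_pow,
      ← map_commutatorElement, hyg]

theorem pow_pow_mem_lowerCentralSeries (h : ∀ g : G, g ^ m ∈ commutator G) (g : G) :
    ∀ k : ℕ, g ^ (m ^ k) ∈ (⊤ : Subgroup G).lowerCentralSeries k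
  | 0 => mem_top _
  | k + 1 => by
    rw [pow_succ, pow_mul]
    exact pow_mem_lowerCentralSeries_succ h k _ (pow_pow_mem_lowerCentralSeries h g k)

end

theorem exponent_dvd_pow_class_of_abelianization_exponent_general (G : Type*) [Group G]
    (c m : ℕ) (hc : (⊤ : Subgroup G).lowerCentralSeries c = ⊥)
    (h : ∀ g : G, g ^ m ∈ commutator G) :
    ∀ g : G, g ^ (m ^ c) = 1 := by
  intro g
  simpa [hc] using pow_pow_mem_lowerCentralSeries h g c

/-- If `G` is nilpotent of class at most `c` and its abelianization has exponent
`m > 0` (i.e. `g^m ∈ G'` for all `g`), then `G` has exponent dividing `m^c`. -/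
theorem exponent_dvd_pow_class_of_abelianization_exponent (G : Type*) [Group G]
    (c m : ℕ) (hm : 0 < m) (hc : (⊤ : Subgroup G).lowerCentralSeries c = ⊥)
    (h : ∀ g : G, g ^ m ∈ commutator G) :
    ∀ g : G, g ^ (m ^ c) = 1 :=
  exponent_dvd_pow_class_of_abelianization_exponent_general G c m hc h
end

section
/- Let G be a group, L a Lie ring, and σ_i : γ_i(G)/γ_{i+1}(G) → L_i surjective additive homomorphisms compatible with commutators as in Hall's setup (so that [σ_i(x̄), σ_j(ȳ)] = σ_{i+j}(overline{(x,y)})), with L = L_1 + L_2 + ⋯. Then for every r ≥ 1, γ_r(L) = L_r + L_{r+1} + ⋯. -/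
/-!
The maps `s i` turn the pieces `Li i` into a grading of `L` generated in degree one.
Brackets raise degree, `⁅Li i, Li j⁆ ⊆ Li (i + j)`, because `⁅γ_i(G), γ_j(G)⁆ ≤ γ_{i+j}(G)` by the
three subgroups lemma; and `Li (i + 1)` is additively spanned by brackets `⁅Li i, L⁆`, because
`γ_{i+1}(G)` is generated by commutators of `γ_i(G)` with `G` and `s (i + 1)` is additive there.
The first fact gives `γ_r(L) ⊆ ⨆_{i ≥ r} Li i` by induction on `r`, the second `Li i ⊆ γ_i(L)`.
-/

namespace Subgroup

variable {G : Type*} [Group G]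

theorem commutator_commutator_le_of_rotate {A B C N : Subgroup G} [N.Normal]
    (h1 : ⁅⁅B, C⁆, A⁆ ≤ N) (h2 : ⁅⁅C, A⁆, B⁆ ≤ N) : ⁅⁅A, B⁆, C⁆ ≤ N := by
  have le_iff_map_eq_bot : ∀ X Y : Subgroup G,
      ⁅X, Y⁆ ≤ N ↔ ⁅X.map (QuotientGroup.mk' N), Y.map (QuotientGroup.mk' N)⁆ = ⊥ := by
    intro X Y
    rw [← map_commutator, map_eq_bot_iff, QuotientGroup.ker_mk']
  rw [le_iff_map_eq_bot, map_commutator] at h1 h2 ⊢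
  exact commutator_commutator_eq_bot_of_rotate h1 h2

/-- `lowerCentralSeries n` is `γ_{n+1}`, so this says `⁅γ_{a+1}, γ_{b+1}⁆ ≤ γ_{a+b+2}`. -/
theorem commutator_lowerCentralSeries_le (a b : ℕ) :
    ⁅(⊤ : Subgroup G).lowerCentralSeries a, (⊤ : Subgroup G).lowerCentralSeries b⁆ ≤
      (⊤ : Subgroup G).lowerCentralSeries (a + b + 1) := by
  induction b generalizing a with
  | zero => exact le_rfl
  | succ b ih =>
    rw [lowerCentralSeries_succ, commutator_comm]
    refine commutator_commutator_le_of_rotate ?_ ?_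
    · rw [commutator_comm ⊤, ← lowerCentralSeries_succ]
      exact (ih (a + 1)).trans_eq (by congr 1; omega)
    · exact commutator_mono (ih a) le_rfl

theorem apply_mem_addClosure_image_of_map_mul {A : Type*} [AddGroup A] {f : G → A}
    {S : Set G} (hf : ∀ x ∈ closure S, ∀ y ∈ closure S, f (x * y) = f x + f y) :
    ∀ x ∈ closure S, f x ∈ AddSubgroup.closure (f '' S) := by
  have map_one : f 1 = 0 := by
    simpa using hf 1 (one_mem _) 1 (one_mem _)
  intro x hx
  induction hx using closure_induction with
  | mem x hx => exact AddSubgroup.subset_closure (Set.mem_image_of_mem f hx)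
  | one => rw [map_one]; exact zero_mem _
  | mul x y hx hy fx fy => rw [hf x hx y hy]; exact add_mem fx fy
  | inv x hx fx =>
    have := hf x hx x⁻¹ (inv_mem hx)
    rw [mul_inv_cancel, map_one] at this
    rw [eq_neg_of_add_eq_zero_right this.symm]
    exact neg_mem fx

end Subgroup

namespace LieRing

variable {L : Type*} [LieRing L]

theorem lie_mem_of_mem_iSup {ι κ : Sort*} {S : ι → AddSubgroup L} {T : κ → AddSubgroup L}
    {M : AddSubgroup L} (h : ∀ i j, ∀ a ∈ S i, ∀ b ∈ T j, ⁅a, b⁆ ∈ M) {a b : L}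
    (ha : a ∈ ⨆ i, S i) (hb : b ∈ ⨆ j, T j) : ⁅a, b⁆ ∈ M := by
  refine AddSubgroup.iSup_induction S (C := fun a => ⁅a, b⁆ ∈ M) ha (fun i a ha => ?_)
    (by rw [zero_lie]; exact zero_mem M) (fun a a' ha ha' => by rw [add_lie]; exact add_mem ha ha')
  refine AddSubgroup.iSup_induction T (C := fun b => ⁅a, b⁆ ∈ M) hb (fun j b hb => h i j a ha b hb)
    (by rw [lie_zero]; exact zero_mem M) (fun b b' hb hb' => by rw [lie_add]; exact add_mem hb hb')

variable (Li : ℕ → AddSubgroup L)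

theorem lie_mem_iSup_ge
    (hlie : ∀ i j, 1 ≤ i → 1 ≤ j → ∀ a ∈ Li i, ∀ b ∈ Li j, ⁅a, b⁆ ∈ Li (i + j))
    {m n : ℕ} (hm : 1 ≤ m) (hn : 1 ≤ n) {a b : L}
    (ha : a ∈ ⨆ i, ⨆ _ : m ≤ i, Li i) (hb : b ∈ ⨆ j, ⨆ _ : n ≤ j, Li j) :
    ⁅a, b⁆ ∈ ⨆ k, ⨆ _ : m + n ≤ k, Li k := by
  refine lie_mem_of_mem_iSup (fun i j a ha b hb => ?_) ha hb
  refine lie_mem_of_mem_iSup (fun hi hj a ha b hb => ?_) ha hb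
  exact AddSubgroup.mem_iSup_of_mem (i + j) <| AddSubgroup.mem_iSup_of_mem (by omega) <|
    hlie i j (by omega) (by omega) a ha b hb

theorem mem_iSup_ge_of_mem_lowerCentralSeries
    (hsum : (⨆ i : ℕ, ⨆ _ : 1 ≤ i, Li i) = ⊤)
    (hlie : ∀ i j, 1 ≤ i → 1 ≤ j → ∀ a ∈ Li i, ∀ b ∈ Li j, ⁅a, b⁆ ∈ Li (i + j)) (k : ℕ) :
    ∀ z ∈ LieModule.lowerCentralSeries ℤ L L k, z ∈ ⨆ i, ⨆ _ : k + 1 ≤ i, Li i := by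
  induction k with
  | zero => intro z _; rw [hsum]; trivial
  | succ k ih =>
    intro z hz
    rw [← LieSubmodule.mem_toSubmodule, LieModule.lowerCentralSeries_succ,
      LieSubmodule.lieIdeal_oper_eq_linear_span'] at hz
    suffices h : {w | ∃ x ∈ (⊤ : LieIdeal ℤ L), ∃ y ∈ LieModule.lowerCentralSeries ℤ L L k,
        ⁅x, y⁆ = w} ⊆ AddSubgroup.toIntSubmodule (⨆ i, ⨆ _ : k + 1 + 1 ≤ i, Li i) from
      Submodule.span_le.2 h hz
    rintro _ ⟨x, -, y, hy, rfl⟩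
    have hx : x ∈ ⨆ i, ⨆ _ : 1 ≤ i, Li i := by rw [hsum]; trivial
    rw [AddSubgroup.coe_toIntSubmodule, SetLike.mem_coe]
    simpa only [Nat.add_comm 1] using
      lie_mem_iSup_ge Li hlie le_rfl (Nat.le_add_left 1 k) hx (ih y hy)

theorem mem_lowerCentralSeries_of_mem_component
    (hgen : ∀ i, 1 ≤ i → Li (i + 1) ≤ AddSubgroup.closure {x | ∃ a ∈ Li i, ∃ b : L, ⁅a, b⁆ = x})
    (i : ℕ) (hi : 1 ≤ i) : ∀ a ∈ Li i, a ∈ LieModule.lowerCentralSeries ℤ L L (i - 1) := by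
  induction i, hi using Nat.le_induction with
  | base => intro a _; exact LieSubmodule.mem_top a
  | succ i hi ih =>
    intro a ha
    refine (AddSubgroup.closure_le
      (K := (LieModule.lowerCentralSeries ℤ L L i).toSubmodule.toAddSubgroup)).2 ?_ (hgen i hi ha)
    rintro _ ⟨a, ha, b, rfl⟩
    obtain ⟨k, rfl⟩ : ∃ k, i = k + 1 := ⟨i - 1, by omega⟩
    rw [← lie_skew]
    refine neg_mem ?_
    show _ ∈ LieModule.lowerCentralSeries ℤ L L (k + 1)
    rw [LieModule.lowerCentralSeries_succ]
    exact LieSubmodule.lie_mem_lie (LieSubmodule.mem_top b) (ih a ha)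

theorem lowerCentralSeries_eq_iSup_ge
    (hsum : (⨆ i : ℕ, ⨆ _ : 1 ≤ i, Li i) = ⊤)
    (hlie : ∀ i j, 1 ≤ i → 1 ≤ j → ∀ a ∈ Li i, ∀ b ∈ Li j, ⁅a, b⁆ ∈ Li (i + j))
    (hgen : ∀ i, 1 ≤ i → Li (i + 1) ≤ AddSubgroup.closure {x | ∃ a ∈ Li i, ∃ b : L, ⁅a, b⁆ = x})
    (r : ℕ) (hr : 1 ≤ r) :
    ((LieModule.lowerCentralSeries ℤ L L (r - 1) : LieSubmodule ℤ L L) : Set L) =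
      ((⨆ i : ℕ, ⨆ _ : r ≤ i, Li i : AddSubgroup L) : Set L) := by
  apply Set.Subset.antisymm
  · intro z hz
    rw [SetLike.mem_coe] at hz ⊢
    simpa only [Nat.sub_add_cancel hr] using
      mem_iSup_ge_of_mem_lowerCentralSeries Li hsum hlie (r - 1) z hz
  · intro z hz
    rw [SetLike.mem_coe] at hz ⊢
    refine AddSubgroup.iSup_induction _ (C := (· ∈ LieModule.lowerCentralSeries ℤ L L (r - 1))) hz
      (fun i a ha => ?_) (zero_mem _) (fun _ _ => add_mem)
    refine AddSubgroup.iSup_induction _ (C := (· ∈ LieModule.lowerCentralSeries ℤ L L (r - 1))) ha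
      (fun hi a ha => ?_) (zero_mem _) (fun _ _ => add_mem)
    exact LieModule.antitone_lowerCentralSeries ℤ L L (by omega)
      (mem_lowerCentralSeries_of_mem_component Li hgen i (by omega) a ha)

end LieRing

section CommutatorCompatible

open scoped commutatorElement

variable {G : Type*} [Group G] {L : Type*} [LieRing L] {s : ℕ → G → L} {Li : ℕ → AddSubgroup L}

theorem lie_mem_add_of_commutator_compatible
    (hmem : ∀ i, 1 ≤ i → ∀ x ∈ (⊤ : Subgroup G).lowerCentralSeries (i - 1), s i x ∈ Li i)
    (hsurj : ∀ i, 1 ≤ i → ∀ a ∈ Li i, ∃ x ∈ (⊤ : Subgroup G).lowerCentralSeries (i - 1), s i x = a)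
    (hcompat : ∀ i j, 1 ≤ i → 1 ≤ j → ∀ x ∈ (⊤ : Subgroup G).lowerCentralSeries (i - 1),
      ∀ y ∈ (⊤ : Subgroup G).lowerCentralSeries (j - 1),
        ⁅s i x, s j y⁆ = s (i + j) (x⁻¹ * y⁻¹ * x * y))
    (i j : ℕ) (hi : 1 ≤ i) (hj : 1 ≤ j) : ∀ a ∈ Li i, ∀ b ∈ Li j, ⁅a, b⁆ ∈ Li (i + j) := by
  intro a ha b hb
  obtain ⟨x, hx, rfl⟩ := hsurj i hi a ha
  obtain ⟨y, hy, rfl⟩ := hsurj j hj b hb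
  rw [hcompat i j hi hj x hx y hy]
  refine hmem (i + j) (by omega) _ ?_
  have hxy : x⁻¹ * y⁻¹ * x * y = ⁅x⁻¹, y⁻¹⁆ := by rw [commutatorElement_def, inv_inv, inv_inv]
  have := Subgroup.commutator_lowerCentralSeries_le (i - 1) (j - 1)
    (Subgroup.commutator_mem_commutator (inv_mem hx) (inv_mem hy))
  rwa [hxy, show i + j - 1 = i - 1 + (j - 1) + 1 by omega]

theorem le_closure_lie_of_commutator_compatible
    (hadd : ∀ i, 1 ≤ i → ∀ x ∈ (⊤ : Subgroup G).lowerCentralSeries (i - 1),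
      ∀ y ∈ (⊤ : Subgroup G).lowerCentralSeries (i - 1), s i (x * y) = s i x + s i y)
    (hmem : ∀ i, 1 ≤ i → ∀ x ∈ (⊤ : Subgroup G).lowerCentralSeries (i - 1), s i x ∈ Li i)
    (hsurj : ∀ i, 1 ≤ i → ∀ a ∈ Li i, ∃ x ∈ (⊤ : Subgroup G).lowerCentralSeries (i - 1), s i x = a)
    (hcompat : ∀ i j, 1 ≤ i → 1 ≤ j → ∀ x ∈ (⊤ : Subgroup G).lowerCentralSeries (i - 1),
      ∀ y ∈ (⊤ : Subgroup G).lowerCentralSeries (j - 1),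
        ⁅s i x, s j y⁆ = s (i + j) (x⁻¹ * y⁻¹ * x * y))
    (i : ℕ) (hi : 1 ≤ i) :
    Li (i + 1) ≤ AddSubgroup.closure {x | ∃ a ∈ Li i, ∃ b : L, ⁅a, b⁆ = x} := by
  intro a ha
  obtain ⟨x, hx, rfl⟩ := hsurj (i + 1) (by omega) a ha
  obtain ⟨k, rfl⟩ : ∃ k, i = k + 1 := ⟨i - 1, by omega⟩
  have hx' : x ∈ Subgroup.closure
      {g | ∃ p ∈ (⊤ : Subgroup G).lowerCentralSeries k, ∃ q ∈ ⊤, ⁅p, q⁆ = g} := hx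
  refine AddSubgroup.closure_mono ?_
    (Subgroup.apply_mem_addClosure_image_of_map_mul (hadd (k + 2) (by omega)) x hx')
  rintro _ ⟨_, ⟨p, hp, q, -, rfl⟩, rfl⟩
  have hp' : p⁻¹ ∈ (⊤ : Subgroup G).lowerCentralSeries (k + 1 - 1) := inv_mem hp
  refine ⟨s (k + 1) p⁻¹, hmem (k + 1) (by omega) _ hp', s 1 q⁻¹, ?_⟩
  rw [hcompat (k + 1) 1 (by omega) le_rfl _ hp' _ (Subgroup.mem_top _), commutatorElement_def,
    inv_inv, inv_inv]

end CommutatorCompatible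

theorem lie_lowerCentralSeries_eq_sum_general (G : Type*) [Group G]
    (L : Type*) [LieRing L] (s : ℕ → G → L) (Li : ℕ → AddSubgroup L)
    (hadd : ∀ i, 1 ≤ i → ∀ x ∈ (⊤ : Subgroup G).lowerCentralSeries (i - 1),
      ∀ y ∈ (⊤ : Subgroup G).lowerCentralSeries (i - 1), s i (x * y) = s i x + s i y)
    (hmem : ∀ i, 1 ≤ i → ∀ x ∈ (⊤ : Subgroup G).lowerCentralSeries (i - 1), s i x ∈ Li i)
    (hsurj : ∀ i, 1 ≤ i → ∀ a ∈ Li i, ∃ x ∈ (⊤ : Subgroup G).lowerCentralSeries (i - 1), s i x = a)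
    (hsum : (⨆ i : ℕ, ⨆ _ : 1 ≤ i, Li i) = (⊤ : AddSubgroup L))
    (hcompat : ∀ i j, 1 ≤ i → 1 ≤ j → ∀ x ∈ (⊤ : Subgroup G).lowerCentralSeries (i - 1),
      ∀ y ∈ (⊤ : Subgroup G).lowerCentralSeries (j - 1),
        ⁅s i x, s j y⁆ = s (i + j) (x⁻¹ * y⁻¹ * x * y)) :
    ∀ r : ℕ, 1 ≤ r →
      ((LieModule.lowerCentralSeries ℤ L L (r - 1) : LieSubmodule ℤ L L) : Set L) =
        ((⨆ i : ℕ, ⨆ _ : r ≤ i, Li i : AddSubgroup L) : Set L) :=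
  LieRing.lowerCentralSeries_eq_iSup_ge Li hsum
    (lie_mem_add_of_commutator_compatible hmem hsurj hcompat)
    (le_closure_lie_of_commutator_compatible hadd hmem hsurj hcompat)

/-- In Hall's setup (maps `s i` from `γ_i(G)` onto additive subgroups `Li i` of a Lie ring
`L`, compatible with commutators, with `L = L_1 + L_2 + ⋯`), for every `r ≥ 1` the `r`-th
term of the lower central series of the Lie ring `L` equals `L_r + L_{r+1} + ⋯`. -/
theorem lie_lowerCentralSeries_eq_sum (G : Type*) [Group G]
    (L : Type*) [LieRing L] (s : ℕ → G → L) (Li : ℕ → AddSubgroup L)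
    (hadd : ∀ i, 1 ≤ i → ∀ x ∈ (⊤ : Subgroup G).lowerCentralSeries (i - 1),
      ∀ y ∈ (⊤ : Subgroup G).lowerCentralSeries (i - 1), s i (x * y) = s i x + s i y)
    (hker : ∀ i, 1 ≤ i → ∀ x ∈ (⊤ : Subgroup G).lowerCentralSeries i, s i x = 0)
    (hmem : ∀ i, 1 ≤ i → ∀ x ∈ (⊤ : Subgroup G).lowerCentralSeries (i - 1), s i x ∈ Li i)
    (hsurj : ∀ i, 1 ≤ i → ∀ a ∈ Li i, ∃ x ∈ (⊤ : Subgroup G).lowerCentralSeries (i - 1), s i x = a)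
    (hsum : (⨆ i : ℕ, ⨆ _ : 1 ≤ i, Li i) = (⊤ : AddSubgroup L))
    (hcompat : ∀ i j, 1 ≤ i → 1 ≤ j → ∀ x ∈ (⊤ : Subgroup G).lowerCentralSeries (i - 1),
      ∀ y ∈ (⊤ : Subgroup G).lowerCentralSeries (j - 1),
        ⁅s i x, s j y⁆ = s (i + j) (x⁻¹ * y⁻¹ * x * y)) :
    ∀ r : ℕ, 1 ≤ r →
      ((LieModule.lowerCentralSeries ℤ L L (r - 1) : LieSubmodule ℤ L L) : Set L) =
        ((⨆ i : ℕ, ⨆ _ : r ≤ i, Li i : AddSubgroup L) : Set L) :=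
  lie_lowerCentralSeries_eq_sum_general G L s Li hadd hmem hsurj hsum hcompat
end
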